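/- If F, G : 2^ω → 2^ω are superapproximable, then the composition G∘F is superapproximable; moreover a Turing functional superapproximating G∘F may be found uniformly from Turing functionals superapproximating G and F. -/

import Mathlib

noncomputable section

open Filter

/-! ### Computability preliminaries -/

/-- The finite initial segment of length `k` of a sequence. -/
def seg (f : ℕ → ℕ) (k : ℕ) : List ℕ := (List.range k).map f

/-- The finite initial segment of length `k` of an element of Cantor space. -/
def segB (A : ℕ → Bool) (k : ℕ) : List Bool := (List.range k).map A

/-- The join (interleaving) of two sequences. -/
def joinSeq (f g : ℕ → ℕ) : ℕ → ℕ := fun n => if n % 2 = 0 then f (n / 2) else g (n / 2)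

/-- Turing reducibility: there is a Turing functional (presented as a computable map on
finite oracle segments, consistent along the oracle `g`) computing `f` from `g`. -/
def TuringReducibleTo (f g : ℕ → ℕ) : Prop :=
  ∃ φ : List ℕ → ℕ → Option ℕ, Computable₂ φ ∧
    (∀ n k₁ k₂ m₁ m₂, φ (seg g k₁) n = some m₁ → φ (seg g k₂) n = some m₂ → m₁ = m₂) ∧
    (∀ n, ∃ k, φ (seg g k) n = some (f n))

/-- A Turing ideal, presented as a degree-invariant collection of functions `ℕ → ℕ`
closed under join and downward closed under Turing reducibility. -/
structure IsTuringIdeal (I : Set (ℕ → ℕ)) : Prop where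
  nonempty : I.Nonempty
  ne_univ : I ≠ Set.univ
  join_mem : ∀ f g, f ∈ I → g ∈ I → joinSeq f g ∈ I
  downward : ∀ f g, f ∈ I → TuringReducibleTo g f → g ∈ I

/-- A (characteristic function of a) subtree of `ω^{<ω}`. -/
def IsTreeB (T : List ℕ → Bool) : Prop :=
  ∀ l₁ l₂ : List ℕ, l₁ <+: l₂ → T l₂ = true → T l₁ = true

/-- A function on an encodable domain is computable from the oracle `c`. -/
def funRed {α β : Type} [Denumerable α] [Primcodable β] (f : α → β) (c : ℕ → ℕ) : Prop :=
  TuringReducibleTo (fun n => Encodable.encode (f (Denumerable.ofNat α n))) c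

/-- `d` is a PA degree relative to `c`: `d` computes a path through every infinite
`c`-computable finite-branching (`c`-computably bounded) tree. -/
def PARel (d c : ℕ → ℕ) : Prop :=
  ∀ (T : List ℕ → Bool) (b : List ℕ → ℕ),
    IsTreeB T → funRed T c → funRed b c →
    (∀ l x, T (l ++ [x]) = true → x < b l) →
    (∀ n, ∃ l : List ℕ, l.length = n ∧ T l = true) →
    ∃ p : ℕ → ℕ, TuringReducibleTo p d ∧ ∀ k, T (seg p k) = true

/-- A Scott ideal: a Turing ideal containing, for each of its members,
a PA degree relative to that member. -/
def IsScottIdeal (I : Set (ℕ → ℕ)) : Prop :=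
  IsTuringIdeal I ∧ ∀ c ∈ I, ∃ d ∈ I, PARel d c

/-- A set of natural numbers is `Π⁰₁`. -/
def Pi01 (S : Set ℕ) : Prop :=
  ∃ R : ℕ → ℕ → Bool, Computable₂ R ∧ ∀ m, m ∈ S ↔ ∀ s, R m s = true

/-- A set of natural numbers is `Σ⁰₂`. -/
def Sigma02 (S : Set ℕ) : Prop :=
  ∃ R : ℕ → ℕ → ℕ → Bool,
    Computable (fun x : ℕ × ℕ × ℕ => R x.1 x.2.1 x.2.2) ∧
    ∀ m, m ∈ S ↔ ∃ a, ∀ b, R m a b = true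

/-- The jump of an oracle `A : ℕ → ℕ`: the `i`-th partial computable function,
run on (codes of) finite initial segments of `A` with input `i`, halts. -/
def haltsRelN (A : ℕ → ℕ) (i : ℕ) : Prop :=
  ∃ s, ((Denumerable.ofNat Nat.Partrec.Code i).eval
      (Nat.pair (Encodable.encode (seg A s)) i)).Dom

/-- The jump of an oracle `A : ℕ → Bool`. -/
def haltsRelB (A : ℕ → Bool) (i : ℕ) : Prop :=
  ∃ s, ((Denumerable.ofNat Nat.Partrec.Code i).eval
      (Nat.pair (Encodable.encode (segB A s)) i)).Dom

/-- The Turing functional with index `e`, given oracle `A`, computes the total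
function `B` (consistently along `A`). -/
def OracleComputes (e : ℕ) (A B : ℕ → ℕ) : Prop :=
  (∀ n s₁ s₂ m₁ m₂,
      (Denumerable.ofNat Nat.Partrec.Code e).eval
          (Nat.pair (Encodable.encode (seg A s₁)) n) = Part.some m₁ →
      (Denumerable.ofNat Nat.Partrec.Code e).eval
          (Nat.pair (Encodable.encode (seg A s₂)) n) = Part.some m₂ →
      m₁ = m₂) ∧
  (∀ n, ∃ s,
      (Denumerable.ofNat Nat.Partrec.Code e).eval
          (Nat.pair (Encodable.encode (seg A s)) n) = Part.some (B n))

/-- `φ` superapproximates `F : 2^ω → 2^ω`: for every oracle `A` and every `n`, the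
stage-`s` values `φ(A↾s, n, s)` converge to the characteristic function of the
jump of `F(A)` at `n`. -/
def Superapproximates (φ : List Bool → ℕ → ℕ → Bool) (F : (ℕ → Bool) → ℕ → Bool) : Prop :=
  ∀ A : ℕ → Bool, ∀ n : ℕ, ∃ b : Bool,
    (∀ᶠ s in atTop, φ (segB A s) n s = b) ∧ (b = true ↔ haltsRelB (F A) n)

/-- `F : 2^ω → 2^ω` is superapproximable. -/
def Superapproximable (F : (ℕ → Bool) → ℕ → Bool) : Prop :=
  ∃ φ : List Bool → ℕ → ℕ → Bool,
    Computable (fun x : List Bool × ℕ × ℕ => φ x.1 x.2.1 x.2.2) ∧ Superapproximates φ F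

/-- The Turing functional with index `e` superapproximates `F : 2^ω → 2^ω`. -/
def CodeSuperapprox (e : ℕ) (F : (ℕ → Bool) → ℕ → Bool) : Prop :=
  ∀ A : ℕ → Bool, ∀ n : ℕ, ∃ b : Bool,
    (∀ᶠ s in atTop,
      (Denumerable.ofNat Nat.Partrec.Code e).eval
          (Nat.pair (Encodable.encode (segB A s)) (Nat.pair n s)) = Part.some (cond b 1 0)) ∧
    (b = true ↔ haltsRelB (F A) n)

/-! ### The first-order language of groups -/

/-- Terms of the language of groups, with variables among `Fin k`. -/
inductive GrpTerm : ℕ → Type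
  | var : ∀ {k}, Fin k → GrpTerm k
  | one : ∀ {k}, GrpTerm k
  | mul : ∀ {k}, GrpTerm k → GrpTerm k → GrpTerm k
  | inv : ∀ {k}, GrpTerm k → GrpTerm k

/-- Evaluation of a group term in a group `G` under a valuation of the variables. -/
def GrpTerm.eval {G : Type*} [Group G] : ∀ {k}, GrpTerm k → (Fin k → G) → G
  | _, .var i, v => v i
  | _, .one, _ => 1
  | _, .mul t s, v => t.eval v * s.eval v
  | _, .inv t, v => (t.eval v)⁻¹

/-- First-order formulas of the language of groups (with negation pushed to atoms),
with free variables among `Fin k`.  Quantifiers bind the variable `0`. -/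
inductive GrpFormula : ℕ → Type
  | eq : ∀ {k}, GrpTerm k → GrpTerm k → GrpFormula k
  | ne : ∀ {k}, GrpTerm k → GrpTerm k → GrpFormula k
  | and : ∀ {k}, GrpFormula k → GrpFormula k → GrpFormula k
  | or : ∀ {k}, GrpFormula k → GrpFormula k → GrpFormula k
  | all : ∀ {k}, GrpFormula (k + 1) → GrpFormula k
  | ex : ∀ {k}, GrpFormula (k + 1) → GrpFormula k

/-- Tarskian satisfaction of a group formula in a group `G`. -/
def GrpFormula.Sat {G : Type*} [Group G] : ∀ {k}, GrpFormula k → (Fin k → G) → Prop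
  | _, .eq t s, v => t.eval v = s.eval v
  | _, .ne t s, v => t.eval v ≠ s.eval v
  | _, .and φ ψ, v => φ.Sat v ∧ ψ.Sat v
  | _, .or φ ψ, v => φ.Sat v ∨ ψ.Sat v
  | _, .all φ, v => ∀ g : G, φ.Sat (Fin.cons g v)
  | _, .ex φ, v => ∃ g : G, φ.Sat (Fin.cons g v)

/-- Satisfaction relativized to a subset `S` of `G` (e.g. a subgroup):
quantifiers range over `S`. -/
def GrpFormula.SatOn {G : Type*} [Group G] (S : Set G) :
    ∀ {k}, GrpFormula k → (Fin k → G) → Prop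
  | _, .eq t s, v => t.eval v = s.eval v
  | _, .ne t s, v => t.eval v ≠ s.eval v
  | _, .and φ ψ, v => φ.SatOn S v ∧ ψ.SatOn S v
  | _, .or φ ψ, v => φ.SatOn S v ∨ ψ.SatOn S v
  | _, .all φ, v => ∀ g ∈ S, φ.SatOn S (Fin.cons g v)
  | _, .ex φ, v => ∃ g ∈ S, φ.SatOn S (Fin.cons g v)

/-- A formula is positive iff it does not use negation (i.e. no negated atoms). -/
def GrpFormula.Positive : ∀ {k}, GrpFormula k → Prop
  | _, .eq _ _ => True
  | _, .ne _ _ => False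
  | _, .and φ ψ => φ.Positive ∧ ψ.Positive
  | _, .or φ ψ => φ.Positive ∧ ψ.Positive
  | _, .all φ => φ.Positive
  | _, .ex φ => φ.Positive

/-- A formula is quantifier-free iff it uses no quantifiers. -/
def GrpFormula.QuantifierFree : ∀ {k}, GrpFormula k → Prop
  | _, .eq _ _ => True
  | _, .ne _ _ => True
  | _, .and φ ψ => φ.QuantifierFree ∧ ψ.QuantifierFree
  | _, .or φ ψ => φ.QuantifierFree ∧ ψ.QuantifierFree
  | _, .all _ => False
  | _, .ex _ => False

/-- A quantifier-free formula is negative iff it is built from negated atoms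
(inequations) using `∧` and `∨`. -/
def GrpFormula.NegQF : ∀ {k}, GrpFormula k → Prop
  | _, .eq _ _ => False
  | _, .ne _ _ => True
  | _, .and φ ψ => φ.NegQF ∧ ψ.NegQF
  | _, .or φ ψ => φ.NegQF ∧ ψ.NegQF
  | _, .all _ => False
  | _, .ex _ => False

/-- A Gödel numbering of group terms. -/
def GrpTerm.encode : ∀ {k}, GrpTerm k → ℕ
  | _, .var i => Nat.pair 0 i.val
  | _, .one => Nat.pair 1 0
  | _, .mul t s => Nat.pair 2 (Nat.pair t.encode s.encode)
  | _, .inv t => Nat.pair 3 t.encode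

/-- A Gödel numbering of group formulas. -/
def GrpFormula.encode : ∀ {k}, GrpFormula k → ℕ
  | _, .eq t s => Nat.pair 0 (Nat.pair t.encode s.encode)
  | _, .ne t s => Nat.pair 1 (Nat.pair t.encode s.encode)
  | _, .and φ ψ => Nat.pair 2 (Nat.pair φ.encode ψ.encode)
  | _, .or φ ψ => Nat.pair 3 (Nat.pair φ.encode ψ.encode)
  | _, .all φ => Nat.pair 4 φ.encode
  | _, .ex φ => Nat.pair 5 φ.encode

/-- `Σ₀`- and `Π₀`-separated formulas: positive formulas, or conjunctions of a positive
formula with a quantifier-free negative formula. -/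
inductive Sep0 : ∀ {k}, GrpFormula k → Prop
  | pos {k} {φ : GrpFormula k} : φ.Positive → Sep0 φ
  | conj {k} {φ ψ : GrpFormula k} : φ.Positive → ψ.NegQF → Sep0 (φ.and ψ)

mutual
  /-- `Σₙ`-separated formulas. -/
  inductive SigmaSep : ℕ → ∀ {k}, GrpFormula k → Prop
    | base {k} {φ : GrpFormula k} : Sep0 φ → SigmaSep 0 φ
    | ofPi {n k} {φ : GrpFormula k} : PiSep n φ → SigmaSep (n + 1) φ
    | ex {n k} {φ : GrpFormula (k + 1)} : SigmaSep (n + 1) φ → SigmaSep (n + 1) φ.ex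

  /-- `Πₙ`-separated formulas. -/
  inductive PiSep : ℕ → ∀ {k}, GrpFormula k → Prop
    | base {k} {φ : GrpFormula k} : Sep0 φ → PiSep 0 φ
    | ofSigma {n k} {φ : GrpFormula k} : SigmaSep n φ → PiSep (n + 1) φ
    | all {n k} {φ : GrpFormula (k + 1)} : PiSep (n + 1) φ → PiSep (n + 1) φ.all
end

mutual
  /-- Positive prenex `Σₙ` formulas. -/
  inductive PosSigma : ℕ → ∀ {k}, GrpFormula k → Prop
    | base {k} {φ : GrpFormula k} : φ.QuantifierFree → φ.Positive → PosSigma 0 φ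
    | ofPi {n k} {φ : GrpFormula k} : PosPi n φ → PosSigma (n + 1) φ
    | ex {n k} {φ : GrpFormula (k + 1)} : PosSigma (n + 1) φ → PosSigma (n + 1) φ.ex

  /-- Positive prenex `Πₙ` formulas. -/
  inductive PosPi : ℕ → ∀ {k}, GrpFormula k → Prop
    | base {k} {φ : GrpFormula k} : φ.QuantifierFree → φ.Positive → PosPi 0 φ
    | ofSigma {n k} {φ : GrpFormula k} : PosSigma n φ → PosPi (n + 1) φ
    | all {n k} {φ : GrpFormula (k + 1)} : PosPi (n + 1) φ → PosPi (n + 1) φ.all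
end

/-- Purely existential formulas: a block of `∃`'s applied to a quantifier-free formula. -/
inductive ExistentialForm : ∀ {k}, GrpFormula k → Prop
  | base {k} {φ : GrpFormula k} : φ.QuantifierFree → ExistentialForm φ
  | ex {k} {φ : GrpFormula (k + 1)} : ExistentialForm φ → ExistentialForm φ.ex

/-- Purely universal formulas: a block of `∀`'s applied to a quantifier-free formula. -/
inductive UniversalForm : ∀ {k}, GrpFormula k → Prop
  | base {k} {φ : GrpFormula k} : φ.QuantifierFree → UniversalForm φ
  | all {k} {φ : GrpFormula (k + 1)} : UniversalForm φ → UniversalForm φ.all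

/-- Prefix a block of `m` existential quantifiers. -/
def exBlock {k : ℕ} : ∀ m : ℕ, GrpFormula (k + m) → GrpFormula k
  | 0, φ => φ
  | m + 1, φ => exBlock m φ.ex

/-- Prefix a block of `m` universal quantifiers. -/
def allBlock {k : ℕ} : ∀ m : ℕ, GrpFormula (k + m) → GrpFormula k
  | 0, φ => φ
  | m + 1, φ => allBlock m φ.all

/-- Extend a valuation of the `k` parameters by a valuation of the `m`
quantified variables (which occupy the initial positions). -/
def consTuple {G : Type*} : ∀ {m k : ℕ}, (Fin m → G) → (Fin k → G) → Fin (k + m) → G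
  | 0, _, _, a => a
  | _ + 1, _, g, a => Fin.cons (g 0) (consTuple (fun i => g i.succ) a)

/-- The join of an `m`-tuple of sequences. -/
def tupleJoin {m : ℕ} (v : Fin m → ℕ → ℕ) : ℕ → ℕ :=
  fun n => Encodable.encode (List.ofFn fun i => v i n)

/-! ### The computable presentation of `Q̄` and its Galois group -/

/-- A fixed computable presentation of the algebraic closure of `ℚ`. -/
abbrev Qbar : Type := AlgebraicClosure ℚ

/-- The absolute Galois group of `ℚ`, i.e. the automorphism group of `Q̄`. -/
abbrev GalQ : Type := Qbar ≃ₐ[ℚ] Qbar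

/-- A computable presentation of `Q̄` together with the fixed computable chain
`ℚ = F₀ ⊂ F₁ ⊂ ⋯` of finite normal extensions of `ℚ` with union `Q̄`,
each generated by a primitive generator `zₙ`. -/
structure GaloisPresentation where
  e : Qbar ≃ ℕ
  F : ℕ → IntermediateField ℚ Qbar
  z : ℕ → Qbar
  F_zero : F 0 = ⊥
  F_lt : ∀ n, F n < F (n + 1)
  normal : ∀ n, Normal ℚ (F n)
  finiteDim : ∀ n, FiniteDimensional ℚ (F n)
  unionEq : ∀ x : Qbar, ∃ n, x ∈ F n
  genEq : ∀ n, F n = IntermediateField.adjoin ℚ {z n}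
  add_comp : Computable₂ fun a b => e (e.symm a + e.symm b)
  mul_comp : Computable₂ fun a b => e (e.symm a * e.symm b)
  neg_comp : Computable fun a => e (-e.symm a)
  inv_comp : Computable fun a => e (e.symm a)⁻¹
  mem_dec : ∃ d : ℕ → ℕ → Bool, Computable₂ d ∧ ∀ n a, d n a = true ↔ e.symm a ∈ F n
  z_comp : Computable fun n => e (z n)

/-- The identification of an automorphism `f` with the sequence `(f(z₁), f(z₂), …)`. -/
def GaloisPresentation.seqOf (P : GaloisPresentation) (f : GalQ) : ℕ → ℕ :=
  fun n => P.e (f (P.z (n + 1)))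

/-- The restriction of an automorphism of `Q̄` to the finite normal extension `Fₙ`. -/
def GaloisPresentation.restrictAut (P : GaloisPresentation) (n : ℕ) (f : GalQ) :
    ↥(P.F n) ≃ₐ[ℚ] ↥(P.F n) :=
  haveI := P.normal n
  AlgEquiv.restrictNormal f ↥(P.F n)

/-- The level-`n` node of the Galois tree determined by an automorphism `σ`. -/
def nodeOf (P : GaloisPresentation) (n : ℕ) (σ : GalQ) : List ℕ :=
  (List.range n).map fun i => P.e (σ (P.z (i + 1)))

/-- Membership in the Galois tree `T_Q̄`: the nodes at level `n` are the tuples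
`(σ(z₁), …, σ(zₙ))` for automorphisms `σ`. -/
def TQmem (P : GaloisPresentation) (l : List ℕ) : Prop :=
  ∃ σ : GalQ, l = nodeOf P l.length σ

/-- The join of the parameter tuple `a`, as a single oracle. -/
def paramJoin (P : GaloisPresentation) {k : ℕ} (a : Fin k → GalQ) : ℕ → ℕ :=
  tupleJoin fun i => P.seqOf (a i)

/-- A bare computable presentation of `Q̄` (without a fixed chain): the field
operations are computable and finitely generated subfields are uniformly decidable. -/
structure CompPresentation where
  e : Qbar ≃ ℕ
  add_comp : Computable₂ fun a b => e (e.symm a + e.symm b)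
  mul_comp : Computable₂ fun a b => e (e.symm a * e.symm b)
  neg_comp : Computable fun a => e (-e.symm a)
  inv_comp : Computable fun a => e (e.symm a)⁻¹
  fg_dec : ∃ d : List ℕ → ℕ → Bool, Computable₂ d ∧
    ∀ (l : List ℕ) (a : ℕ),
      d l a = true ↔ e.symm a ∈ IntermediateField.adjoin ℚ {x : Qbar | ∃ b ∈ l, e.symm b = x}

end

/-!
To approximate `(G ∘ F)(A)'` at stage `s`, guess initial segments of `F(A)'` from the stage-`s`
approximation to `F`, and treat them as segments of `B'` for `B = F(A)`. Since `B'` decides `B`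
uniformly, and decides whether the stage approximation to `G(B)'` at `n` still changes after a
given stage, a long enough true segment of `B'` yields the limit of that approximation, i.e.
`G(B)'(n)`. For large `s` all guesses up to a fixed length are correct, so the shortest guess that
yields an answer yields the right one. All of this is primitive recursive in the codes, which
gives the uniformity.
-/

open Filter Encodable Denumerable
open Nat.Partrec (Code)

noncomputable section

theorem List.findSome?_range_eq_some {α : Type*} {f : ℕ → Option α} {m : ℕ} {v : α}
    (h : (List.range m).findSome? f = some v) :
    ∃ k < m, f k = some v ∧ ∀ j < k, f j = none := by
  induction m with
  | zero => simp at h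
  | succ m ih =>
    rw [List.range_succ, List.findSome?_append] at h
    cases hm : (List.range m).findSome? f with
    | some w =>
      obtain ⟨k, hk, hfk, hbefore⟩ := ih (by simpa [hm] using h)
      exact ⟨k, by omega, hfk, hbefore⟩
    | none =>
      rw [List.findSome?_eq_none_iff] at hm
      refine ⟨m, by omega, ?_, fun j hj => hm j (List.mem_range.2 hj)⟩
      simpa [List.findSome?_eq_none_iff.2 hm] using h

theorem Primrec.list_findSome? {α β σ : Type*} [Primcodable α] [Primcodable β] [Primcodable σ]
    {f : α → List β} {g : α → β → Option σ} (hf : Primrec f) (hg : Primrec₂ g) :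
    Primrec fun a => (f a).findSome? (g a) :=
  (list_head?.comp (listFilterMap hf hg)).of_eq fun _ => List.head?_filterMap

theorem exists_primrec_code {α : Type*} [Primcodable α] {f : α → ℕ →. ℕ} (hf : Partrec₂ f) :
    ∃ c : α → Code, Primrec c ∧ ∀ a x, (c a).eval x = f a x := by
  let g : ℕ →. ℕ := fun y => ((decode (α := α) y.unpair.1 : Option α) : Part α).bind
    fun a => f a y.unpair.2
  have hg : Partrec g := (Computable.ofOption (Computable.decode.comp
    (Computable.fst.comp Computable.unpair))).bind
      (hf.comp Computable.snd (Computable.snd.comp (Computable.unpair.comp Computable.fst)))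
  obtain ⟨c, hc⟩ := Code.exists_code.1 (Partrec.nat_iff.1 hg)
  refine ⟨fun a => c.curry (encode a), Code.primrec₂_curry.comp (Primrec.const c) Primrec.encode,
    fun a x => ?_⟩
  simp [Code.eval_curry, hc, g]

theorem segB_length (A : ℕ → Bool) (s : ℕ) : (segB A s).length = s := by simp [segB]

theorem segB_take (A : ℕ → Bool) {t s : ℕ} (h : t ≤ s) : (segB A s).take t = segB A t := by
  rw [segB, ← List.map_take, List.take_range, Nat.min_eq_left h, segB]

theorem getElem?_segB (A : ℕ → Bool) (i s : ℕ) :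
    (segB A s)[i]? = if i < s then some (A i) else none := by
  split_ifs with h <;> simp [segB, h]

theorem exists_primrec_index_haltsRelB_iff {α : Type*} [Primcodable α]
    {p : α → List Bool → Prop} [DecidableRel p] (hp : PrimrecRel p) :
    ∃ idx : α → ℕ, Primrec idx ∧ ∀ a B, haltsRelB B (idx a) ↔ ∃ s, p a (segB B s) := by
  let f : α → ℕ →. ℕ := fun a x =>
    ((if p a ((decode x.unpair.1).getD []) then some 0 else none : Option ℕ) : Part ℕ)
  have hf : Partrec₂ f := Computable.ofOption <| Primrec.to_comp <|
    Primrec.ite (hp.comp Primrec.fst (Primrec.option_getD.comp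
        (Primrec.decode.comp (Primrec.fst.comp (Primrec.unpair.comp Primrec.snd)))
        (Primrec.const [])))
      (Primrec.const (some 0)) (Primrec.const none)
  obtain ⟨c, hc, hc_eval⟩ := exists_primrec_code hf
  refine ⟨fun a => encode (c a), Primrec.encode.comp hc, fun a B => ?_⟩
  simp only [haltsRelB, ofNat_encode, hc_eval, f, Nat.unpair_pair, encodek, Option.getD_some]
  refine exists_congr fun s => ?_
  split_ifs with h <;> simp [h]

theorem exists_primrec_index_eval {α : Type*} [Primcodable α] {φ : α → List Bool → ℕ → ℕ → Bool}
    (hφ : Computable fun x : α × List Bool × ℕ × ℕ => φ x.1 x.2.1 x.2.2.1 x.2.2.2) :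
    ∃ e : α → ℕ, Primrec e ∧ ∀ a σ n s, (ofNat Code (e a)).eval
      (Nat.pair (encode σ) (Nat.pair n s)) = Part.some (cond (φ a σ n s) 1 0) := by
  let f : α → ℕ → ℕ := fun a x =>
    cond (φ a ((decode x.unpair.1).getD []) x.unpair.2.unpair.1 x.unpair.2.unpair.2) 1 0
  have hf : Computable₂ f := by
    have hx : Computable fun y : α × ℕ => y.2.unpair := Computable.unpair.comp .snd
    exact Computable.cond (hφ.comp (Computable.fst.pair
        ((Computable.option_getD (Computable.decode.comp (Computable.fst.comp hx))
          (Computable.const [])).pair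
        ((Computable.fst.comp (Computable.unpair.comp (Computable.snd.comp hx))).pair
          (Computable.snd.comp (Computable.unpair.comp (Computable.snd.comp hx)))))))
      (Computable.const 1) (Computable.const 0)
  obtain ⟨c, hc, hc_eval⟩ := exists_primrec_code hf.partrec₂
  exact ⟨fun a => encode (c a), Primrec.encode.comp hc, fun a σ n s => by simp [hc_eval, f]⟩

theorem Superapproximates.codeSuperapprox {e : ℕ} {φ : List Bool → ℕ → ℕ → Bool}
    {F : (ℕ → Bool) → ℕ → Bool} (h : Superapproximates φ F)
    (he : ∀ σ n s, (ofNat Code e).eval (Nat.pair (encode σ) (Nat.pair n s)) =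
      Part.some (cond (φ σ n s) 1 0)) :
    CodeSuperapprox e F := fun A n =>
  let ⟨b, hb, hbF⟩ := h A n
  ⟨b, hb.mono fun s hs => by rw [he, hs], hbF⟩

theorem Superapproximable.exists_codeSuperapprox {F : (ℕ → Bool) → ℕ → Bool}
    (hF : Superapproximable F) : ∃ e, CodeSuperapprox e F := by
  obtain ⟨φ, hφ, hφF⟩ := hF
  obtain ⟨e, -, he⟩ := exists_primrec_index_eval (α := Unit) (φ := fun _ => φ) (hφ.comp .snd)
  exact ⟨e (), hφF.codeSuperapprox (he ())⟩

def stageRun (e : ℕ) (σ : List Bool) (n s t : ℕ) : Option ℕ :=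
  (ofNat Code e).evaln s (Nat.pair (encode (σ.take t)) (Nat.pair n t))

/-- Reading off the latest `t ≤ s` whose run has converged by stage `s` (rather than `t = s`,
which need not converge within `s` steps) turns the code `e` into a total approximation. -/
def stageApprox (e : ℕ) (σ : List Bool) (n s : ℕ) : Bool :=
  stageRun e σ n s (Nat.findGreatest (fun t => (stageRun e σ n s t).isSome) s) = some 1

section Primrec

variable {α : Type*} [Primcodable α] {e n s : α → ℕ} {σ : α → List Bool}

theorem primrec_stageRun {t : α → ℕ} (he : Primrec e) (hσ : Primrec σ) (hn : Primrec n)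
    (hs : Primrec s) (ht : Primrec t) :
    Primrec fun a => stageRun (e a) (σ a) (n a) (s a) (t a) :=
  Code.primrec_evaln.comp <| (hs.pair ((Primrec.ofNat Code).comp he)).pair <|
    Primrec₂.natPair.comp (Primrec.encode.comp (Primrec.list_take.comp ht hσ))
      (Primrec₂.natPair.comp hn ht)

theorem primrec_stageApprox (he : Primrec e) (hσ : Primrec σ) (hn : Primrec n)
    (hs : Primrec s) : Primrec fun a => stageApprox (e a) (σ a) (n a) (s a) := by
  have hlast : Primrec fun a =>
      Nat.findGreatest (fun t => (stageRun (e a) (σ a) (n a) (s a) t).isSome) (s a) :=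
    Primrec.nat_findGreatest hs <| Primrec.eq.comp (Primrec.option_isSome.comp <|
      primrec_stageRun (he.comp .fst) (hσ.comp .fst) (hn.comp .fst) (hs.comp .fst) .snd)
      (Primrec.const true)
  exact (Primrec.eq.comp (primrec_stageRun he hσ hn hs hlast) (Primrec.const (some 1))).decide

end Primrec

theorem CodeSuperapprox.superapproximates_stageApprox {e : ℕ} {F : (ℕ → Bool) → ℕ → Bool}
    (h : CodeSuperapprox e F) : Superapproximates (stageApprox e) F := by
  intro A n
  obtain ⟨b, hb, hbF⟩ := h A n
  refine ⟨b, ?_, hbF⟩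
  obtain ⟨s₀, hs₀⟩ := eventually_atTop.1 hb
  have hconv : cond b 1 0 ∈
      (ofNat Code e).eval (Nat.pair (encode (segB A s₀)) (Nat.pair n s₀)) := by
    rw [hs₀ s₀ le_rfl]; exact Part.mem_some _
  obtain ⟨k₀, hk₀⟩ := Code.evaln_complete.1 hconv
  filter_upwards [eventually_ge_atTop (max s₀ k₀)] with s hs
  have hrun : ∀ t ≤ s, stageRun e (segB A s) n s t = (ofNat Code e).evaln s
      (Nat.pair (encode (segB A t)) (Nat.pair n t)) := fun t ht => by
    rw [stageRun, segB_take A ht]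
  have hconv_s₀ : (stageRun e (segB A s) n s s₀).isSome := by
    rw [hrun s₀ (le_of_max_le_left hs), Code.evaln_mono (le_of_max_le_right hs) hk₀]; rfl
  set T := Nat.findGreatest (fun t => (stageRun e (segB A s) n s t).isSome) s
  have hs₀T : s₀ ≤ T := Nat.le_findGreatest (le_of_max_le_left hs) hconv_s₀
  have hTs : T ≤ s := Nat.findGreatest_le s
  obtain ⟨v, hv⟩ := Option.isSome_iff_exists.1
    (Nat.findGreatest_spec (P := fun t => (stageRun e (segB A s) n s t).isSome)
      (le_of_max_le_left hs) hconv_s₀)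
  have hvb : v = cond b 1 0 := by
    have := Code.evaln_sound (show v ∈ _ from (hrun T hTs).symm.trans hv)
    rwa [hs₀ T hs₀T, Part.mem_some_iff] at this
  simp only [stageApprox, hv, hvb]
  cases b <;> simp

theorem exists_bitIndex : ∃ idx : ℕ → ℕ, Primrec idx ∧
    ∀ (X : ℕ → Bool) n, haltsRelB X (idx n) ↔ X n = true := by
  obtain ⟨idx, hidx, hspec⟩ :=
    exists_primrec_index_haltsRelB_iff (p := fun n σ => σ[n]? = some true)
    (Primrec.eq.comp (Primrec.list_getElem?.comp Primrec.snd Primrec.fst) (Primrec.const _))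
  refine ⟨idx, hidx, fun X n => (hspec n X).trans ?_⟩
  simp only [getElem?_segB]
  exact ⟨fun ⟨s, hs⟩ => by split_ifs at hs; simp_all, fun h => ⟨n + 1, by simp [h]⟩⟩

theorem exists_changeIndex : ∃ idx : ℕ × ℕ × ℕ → ℕ, Primrec idx ∧ ∀ e n s (B : ℕ → Bool),
    haltsRelB B (idx (e, n, s)) ↔
      ∃ t ≥ s, stageApprox e (segB B t) n t ≠ stageApprox e (segB B s) n s := by
  let p : ℕ × ℕ × ℕ → List Bool → Prop := fun x σ =>
    x.2.2 ≤ σ.length ∧ stageApprox x.1 σ x.2.1 σ.length ≠ stageApprox x.1 (σ.take x.2.2) x.2.1 x.2.2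
  have hp : PrimrecRel p := by
    have he : Primrec fun y : (ℕ × ℕ × ℕ) × List Bool => y.1.1 := .comp .fst .fst
    have hn : Primrec fun y : (ℕ × ℕ × ℕ) × List Bool => y.1.2.1 := .comp .fst (.comp .snd .fst)
    have hs : Primrec fun y : (ℕ × ℕ × ℕ) × List Bool => y.1.2.2 := .comp .snd (.comp .snd .fst)
    have hlen : Primrec fun y : (ℕ × ℕ × ℕ) × List Bool => y.2.length := .comp .list_length .snd
    exact (Primrec.nat_le.comp hs hlen).and <| PrimrecPred.not <| Primrec.eq.comp
      (primrec_stageApprox he .snd hn hlen)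
      (primrec_stageApprox he (Primrec.list_take.comp hs .snd) hn hs)
  obtain ⟨idx, hidx, hspec⟩ := exists_primrec_index_haltsRelB_iff hp
  refine ⟨idx, hidx, fun e n s B => (hspec _ B).trans ⟨?_, ?_⟩⟩
  · rintro ⟨t, hst, hne⟩
    rw [segB_length] at hst hne
    exact ⟨t, hst, by rwa [segB_take B hst] at hne⟩
  · rintro ⟨t, hst, hne⟩
    exact ⟨t, by rw [segB_length]; exact hst, by rwa [segB_length, segB_take B hst]⟩

def bitIndex : ℕ → ℕ := exists_bitIndex.choose

theorem primrec_bitIndex : Primrec bitIndex := exists_bitIndex.choose_spec.1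

theorem haltsRelB_bitIndex (X : ℕ → Bool) (n : ℕ) : haltsRelB X (bitIndex n) ↔ X n = true :=
  exists_bitIndex.choose_spec.2 X n

def changeIndex (e n s : ℕ) : ℕ := exists_changeIndex.choose (e, n, s)

theorem primrec_changeIndex : Primrec fun x : ℕ × ℕ × ℕ => changeIndex x.1 x.2.1 x.2.2 :=
  exists_changeIndex.choose_spec.1

theorem haltsRelB_changeIndex (e n s : ℕ) (B : ℕ → Bool) :
    haltsRelB B (changeIndex e n s) ↔
      ∃ t ≥ s, stageApprox e (segB B t) n t ≠ stageApprox e (segB B s) n s :=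
  exists_changeIndex.choose_spec.2 e n s B

open Classical in
def jumpChar (B : ℕ → Bool) (i : ℕ) : Bool := decide (haltsRelB B i)

theorem superapproximates_iff_eventually_eq {φ : List Bool → ℕ → ℕ → Bool}
    {F : (ℕ → Bool) → ℕ → Bool} :
    Superapproximates φ F ↔ ∀ A n, ∀ᶠ s in atTop, φ (segB A s) n s = jumpChar (F A) n := by
  refine forall₂_congr fun A n => ⟨fun ⟨b, hb, hbF⟩ => ?_, fun h => ⟨_, h, by simp [jumpChar]⟩⟩
  convert hb
  cases b <;> simp_all [jumpChar]

def readSeg (ρ : List Bool) (s : ℕ) : List Bool :=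
  (List.range s).map fun i => ρ.getD (bitIndex i) false

theorem readSeg_segB_jumpChar {B : ℕ → Bool} {k s : ℕ} (h : ∀ i < s, bitIndex i < k) :
    readSeg (segB (jumpChar B) k) s = segB B s := by
  refine List.map_congr_left fun i hi => ?_
  rw [List.getD_eq_getElem?_getD, getElem?_segB, if_pos (h i (List.mem_range.1 hi))]
  simp [jumpChar, haltsRelB_bitIndex]

/-- Read as a segment of `B'`, `ρ` determines the limit of `stageApprox e (B↾s) n s`: look for a
stage `s` after which `ρ` says there is no change and for which `ρ` is long enough to decode
`B↾s`. -/
def limitFromJump (e : ℕ) (ρ : List Bool) (n : ℕ) : Option Bool :=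
  (List.range (ρ.length + 1)).findSome? fun s =>
    if ρ[changeIndex e n s]? = some false ∧ ∀ i < s, bitIndex i < ρ.length then
      some (stageApprox e (readSeg ρ s) n s)
    else none

section limitFromJump

variable {e n : ℕ} {B : ℕ → Bool} {b : Bool}

theorem limitFromJump_eq_some {k : ℕ} {v : Bool}
    (hb : ∀ᶠ s in atTop, stageApprox e (segB B s) n s = b)
    (h : limitFromJump e (segB (jumpChar B) k) n = some v) : v = b := by
  obtain ⟨s, -, hs, -⟩ := List.findSome?_range_eq_some h
  rw [segB_length] at hs
  split_ifs at hs with hcond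
  obtain ⟨hstable, hbits⟩ := hcond
  have hno_change : ¬ haltsRelB B (changeIndex e n s) := by
    rw [getElem?_segB] at hstable
    split_ifs at hstable
    simpa [jumpChar] using hstable
  rw [haltsRelB_changeIndex] at hno_change
  push Not at hno_change
  obtain ⟨t, ht, hst⟩ := (hb.and (eventually_ge_atTop s)).exists
  rw [← Option.some_inj.1 hs, readSeg_segB_jumpChar hbits, ← hno_change t hst, ht]

theorem exists_limitFromJump_isSome (hb : ∀ᶠ s in atTop, stageApprox e (segB B s) n s = b) :
    ∃ k, (limitFromJump e (segB (jumpChar B) k) n).isSome := by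
  obtain ⟨s₀, hs₀⟩ := eventually_atTop.1 hb
  have hno_change : jumpChar B (changeIndex e n s₀) = false := by
    simp only [jumpChar, decide_eq_false_iff_not, haltsRelB_changeIndex]
    rintro ⟨t, ht, hne⟩
    exact hne ((hs₀ t ht).trans (hs₀ s₀ le_rfl).symm)
  obtain ⟨k, hk_change, hk_bits, hk_s₀⟩ : ∃ k, changeIndex e n s₀ < k ∧
      (∀ i < s₀, bitIndex i < k) ∧ s₀ ≤ k :=
    ((eventually_gt_atTop _).and <| ((eventually_all_finite (Set.finite_Iio s₀)).2
      fun i _ => eventually_gt_atTop (bitIndex i)).and (eventually_ge_atTop s₀)).exists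
  refine ⟨k, List.findSome?_isSome_iff.2 ⟨s₀, ?_, ?_⟩⟩
  · rw [List.mem_range, segB_length]; omega
  · rw [segB_length, getElem?_segB, if_pos hk_change, hno_change, if_pos ⟨rfl, hk_bits⟩]; rfl

end limitFromJump

/-- Only short guesses of `F(A)'` are eventually correct, hence the shortest guess on which
`limitFromJump e₂` succeeds is used. -/
def composeApprox (e₁ e₂ : ℕ) (σ : List Bool) (n s : ℕ) : Bool :=
  ((List.range (s + 1)).findSome? fun k =>
    limitFromJump e₂ ((List.range k).map fun i => stageApprox e₁ σ i s) n).getD false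

theorem superapproximates_composeApprox {e₁ e₂ : ℕ} {F G : (ℕ → Bool) → ℕ → Bool}
    (h₁ : Superapproximates (stageApprox e₁) F) (h₂ : Superapproximates (stageApprox e₂) G) :
    Superapproximates (composeApprox e₁ e₂) fun A => G (F A) := by
  rw [superapproximates_iff_eventually_eq] at h₁ h₂ ⊢
  intro A n
  obtain ⟨k₁, hk₁⟩ := exists_limitFromJump_isSome (h₂ (F A) n)
  obtain ⟨v₁, hv₁⟩ := Option.isSome_iff_exists.1 hk₁
  have hguess : ∀ᶠ s in atTop, ∀ k ≤ k₁,
      (List.range k).map (fun i => stageApprox e₁ (segB A s) i s) = segB (jumpChar (F A)) k := by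
    filter_upwards [(eventually_all_finite (Set.finite_Iio k₁)).2 fun i _ => h₁ A i] with s hs k hk
    exact List.map_congr_left fun i hi => hs i (lt_of_lt_of_le (List.mem_range.1 hi) hk)
  filter_upwards [hguess, eventually_ge_atTop k₁] with s hs hk₁s
  have hsome : ((List.range (s + 1)).findSome? fun k =>
      limitFromJump e₂ ((List.range k).map fun i => stageApprox e₁ (segB A s) i s) n).isSome :=
    List.findSome?_isSome_iff.2 ⟨k₁, List.mem_range.2 (by omega), by rw [hs k₁ le_rfl]; exact hk₁⟩
  obtain ⟨v, hv⟩ := Option.isSome_iff_exists.1 hsome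
  obtain ⟨k, -, hk, hbefore⟩ := List.findSome?_range_eq_some hv
  have hkk₁ : k ≤ k₁ := by
    by_contra! hlt
    simpa [hs k₁ le_rfl, hv₁] using hbefore k₁ hlt
  rw [hs k hkk₁] at hk
  rw [composeApprox, hv, Option.getD_some, limitFromJump_eq_some (h₂ (F A) n) hk]

theorem primrec_readSeg : Primrec₂ readSeg :=
  Primrec.list_map (Primrec.list_range.comp .snd)
    ((Primrec.list_getD false).comp (.comp .fst .fst) (primrec_bitIndex.comp .snd))

section Primrec

variable {α : Type*} [Primcodable α] {n : α → ℕ}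

theorem primrec_limitFromJump {e : α → ℕ} {ρ : α → List Bool} (he : Primrec e) (hρ : Primrec ρ)
    (hn : Primrec n) : Primrec fun a => limitFromJump (e a) (ρ a) (n a) := by
  have hstable : PrimrecPred fun y : α × ℕ =>
      (ρ y.1)[changeIndex (e y.1) (n y.1) y.2]? = some false :=
    Primrec.eq.comp (Primrec.list_getElem?.comp (hρ.comp .fst)
      (primrec_changeIndex.comp ((he.comp .fst).pair ((hn.comp .fst).pair .snd))))
      (Primrec.const _)
  have hbits : PrimrecPred fun y : α × ℕ => ∀ i < y.2, bitIndex i < (ρ y.1).length :=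
    (PrimrecRel.forall_lt (R := fun i m => bitIndex i < m)
      (Primrec.nat_lt.comp (primrec_bitIndex.comp .fst) .snd)).comp .snd
      (Primrec.list_length.comp (hρ.comp .fst))
  exact Primrec.list_findSome? (Primrec.list_range.comp (Primrec.succ.comp
      (Primrec.list_length.comp hρ)))
    (Primrec.ite (hstable.and hbits)
      (Primrec.option_some.comp (primrec_stageApprox (he.comp .fst)
        (primrec_readSeg.comp (hρ.comp .fst) .snd) (hn.comp .fst) .snd))
      (Primrec.const none))

theorem primrec_composeApprox {e₁ e₂ s : α → ℕ} {σ : α → List Bool} (he₁ : Primrec e₁)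
    (he₂ : Primrec e₂) (hσ : Primrec σ) (hn : Primrec n) (hs : Primrec s) :
    Primrec fun a => composeApprox (e₁ a) (e₂ a) (σ a) (n a) (s a) := by
  have hguess : Primrec₂ fun a k => (List.range k).map fun i => stageApprox (e₁ a) (σ a) i (s a) :=
    Primrec.list_map (Primrec.list_range.comp .snd) <| primrec_stageApprox
      (he₁.comp (.comp .fst .fst)) (hσ.comp (.comp .fst .fst)) .snd (hs.comp (.comp .fst .fst))
  exact Primrec.option_getD.comp (Primrec.list_findSome? (Primrec.list_range.comp
      (Primrec.succ.comp hs)) (primrec_limitFromJump (he₂.comp .fst) hguess (hn.comp .fst)))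
    (Primrec.const false)

end Primrec

end

theorem stmt8 :
    (∀ F G : (ℕ → Bool) → ℕ → Bool, Superapproximable F → Superapproximable G →
        Superapproximable fun A => G (F A)) ∧
    ∃ u : ℕ → ℕ → ℕ, Computable₂ u ∧
      ∀ (e₁ e₂ : ℕ) (F G : (ℕ → Bool) → ℕ → Bool),
        CodeSuperapprox e₁ F → CodeSuperapprox e₂ G →
        CodeSuperapprox (u e₁ e₂) fun A => G (F A) := by
  have hcompose : Primrec fun x : (ℕ × ℕ) × List Bool × ℕ × ℕ =>
      composeApprox x.1.1 x.1.2 x.2.1 x.2.2.1 x.2.2.2 :=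
    primrec_composeApprox (.comp .fst .fst) (.comp .snd .fst) (.comp .fst .snd)
      (.comp .fst (.comp .snd .snd)) (.comp .snd (.comp .snd .snd))
  obtain ⟨u, hu, hu_eval⟩ := exists_primrec_index_eval
    (φ := fun e : ℕ × ℕ => composeApprox e.1 e.2) hcompose.to_comp
  refine ⟨fun F G hF hG => ?_, fun e₁ e₂ => u (e₁, e₂), (hu.comp .id).to_comp,
    fun e₁ e₂ F G h₁ h₂ => ?_⟩
  · obtain ⟨e₁, h₁⟩ := hF.exists_codeSuperapprox
    obtain ⟨e₂, h₂⟩ := hG.exists_codeSuperapprox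
    exact ⟨composeApprox e₁ e₂, (primrec_composeApprox (.const e₁) (.const e₂) .fst
        (.comp .fst .snd) (.comp .snd .snd)).to_comp,
      superapproximates_composeApprox h₁.superapproximates_stageApprox
        h₂.superapproximates_stageApprox⟩
  · exact (superapproximates_composeApprox h₁.superapproximates_stageApprox
      h₂.superapproximates_stageApprox).codeSuperapprox (hu_eval (e₁, e₂))
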